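/- arXiv:2108.13204 — 6 statements merged into one kernel-verified Lean document; each statement's English description precedes it below -/
import Mathlib

section
/- For integer q ≥ 2, R_{1,q} := ∑_{n≥1} H_{n-1}/(n−1/2)^q = (q/2)·t̃(q+1) − 2·ln(2)·t̃(q) − (1/2)·∑_{j=1}^{q-2} t̃(q−j)·t̃(j+1), where H_n = ∑_{k=1}^n 1/k and t̃(s) = (2^s−1)ζ(s). -/
/-- odd harmonic numbers of order r: h_n^{(r)} = ∑_{k=1}^n 1/(k-1/2)^r -/
noncomputable def oddH (r n : ℕ) : ℝ := ∑ k ∈ Finset.range n, (((k : ℝ) + 1/2) ^ r)⁻¹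

/-- generalized harmonic numbers of order r: H_n^{(r)} = ∑_{k=1}^n 1/k^r -/
noncomputable def genH (r n : ℕ) : ℝ := ∑ k ∈ Finset.range n, (((k : ℝ) + 1) ^ r)⁻¹

/-- T_{p,q} = ∑_{n≥1} h_{n-1}^{(p)}/(n-1/2)^q -/
noncomputable def Tsum (p q : ℕ) : ℝ := ∑' n : ℕ, oddH p n / ((n : ℝ) + 1/2) ^ q

/-- S̃_{p,q} = ∑_{n≥1} h_n^{(p)}/n^q -/
noncomputable def Ssum (p q : ℕ) : ℝ := ∑' n : ℕ, oddH p (n + 1) / ((n : ℝ) + 1) ^ q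

/-- R_{p,q} = ∑_{n≥1} H_{n-1}^{(p)}/(n-1/2)^q -/
noncomputable def Rsum (p q : ℕ) : ℝ := ∑' n : ℕ, genH p n / ((n : ℝ) + 1/2) ^ q

/-- t̃(s) = ∑_{n≥1} 1/(n-1/2)^s -/
noncomputable def ttv (s : ℕ) : ℝ := ∑' n : ℕ, (((n : ℝ) + 1/2) ^ s)⁻¹

/-- ζ(s) = ∑_{n≥1} 1/n^s (for integer s ≥ 2) -/
noncomputable def zv (s : ℕ) : ℝ := ∑' n : ℕ, (((n : ℝ) + 1) ^ s)⁻¹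

/-!
Write `b m = halfInt m = m + 1/2`. Putting `n = m + k + 1`,
`R_{1,q} = ∑_{m,k} 1/((k+1) (k+1+b m)^q)`. Partial fractions in `a = k+1`, `c = b m` turn the
inner sum into `c^{-q} ∑_k (1/(k+1) - 1/(k+1+c))` minus tails of `t̃` weighted by powers of `c`;
the first series equals `h_{m+1} - 2 log 2`. Summing over `m` gives
`R_{1,q} = T_{1,q} + t̃(q+1) - 2 log 2 t̃(q) - ∑_{i=2}^q T_{q+1-i,i}`. The term `i = q` cancels
`T_{1,q}`, and the others pair up through `T_{p,i} + T_{i,p} = t̃(p) t̃(i) - t̃(p+i)`. Every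
rearrangement is justified by the summability of `1/((k+1) b(k+j+1)^2)` on `ℕ × ℕ`, which
follows from `1/b(n)^2 ≤ 1/n - 1/(n+1)`.
-/

open Finset Filter Topology

lemma hasSum_sub_add_of_antitone {f : ℕ → ℝ} (hf : Antitone f)
    (hf0 : Tendsto f atTop (𝓝 0)) (M : ℕ) :
    HasSum (fun j ↦ f j - f (j + M)) (∑ t ∈ range M, f t) := by
  rw [hasSum_iff_tendsto_nat_of_nonneg fun j ↦ sub_nonneg.2 (hf (Nat.le_add_right j M))]
  have hpartial (N : ℕ) : ∑ j ∈ range N, (f j - f (j + M))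
      = ∑ t ∈ range M, f t - ∑ t ∈ range M, f (N + t) := by
    have h := (sum_range_add f N M).symm.trans (add_comm N M ▸ sum_range_add f M N)
    simp only [sum_sub_distrib, add_comm _ M]
    linarith
  simp_rw [hpartial]
  have htail : Tendsto (fun N ↦ ∑ t ∈ range M, f (N + t)) atTop (𝓝 0) := by
    simpa using tendsto_finsetSum (range M) fun t _ ↦
      (hf0.comp (tendsto_add_atTop_nat t)).congr fun N ↦ by simp [add_comm]
  simpa using tendsto_const_nhds.sub htail

theorem HasSum.sum_range_mul {α : Type*} [NonUnitalNonAssocSemiring α] [TopologicalSpace α]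
    [ContinuousAdd α] [RegularSpace α] {u v : ℕ → α} {a : α}
    (h : HasSum (fun x : ℕ × ℕ ↦ u x.1 * v (x.1 + x.2 + 1)) a) :
    HasSum (fun n ↦ (∑ k ∈ range n, u k) * v n) a := by
  have hanti : HasSum (fun s ↦ ∑ x ∈ antidiagonal s, u x.1 * v (x.1 + x.2 + 1)) a :=
    (HasAntidiagonal.sigmaAntidiagonalEquivProd.hasSum_iff.2 h).sigma fun s ↦ by
      rw [← sum_coe_sort]; exact hasSum_fintype _
  rw [← (Nat.succ_injective.hasSum_iff fun n hn ↦ ?_)]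
  · refine hanti.congr_fun fun s ↦ ?_
    rw [Function.comp_apply, sum_mul, Nat.sum_antidiagonal_eq_sum_range_succ_mk]
    exact sum_congr rfl fun k hk ↦ by
      rw [Nat.add_sub_cancel' (by simpa [Nat.lt_succ_iff] using hk)]
  · obtain rfl : n = 0 := by simpa using hn
    simp

theorem tsum_sum_range_mul_add_tsum_sum_range_mul {u v : ℕ → ℝ} (hu0 : ∀ n, 0 ≤ u n)
    (hv0 : ∀ n, 0 ≤ v n) (hu : Summable u) (hv : Summable v) :
    ∑' n, (∑ k ∈ range n, u k) * v n + ∑' n, (∑ k ∈ range n, v k) * u n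
      = (∑' n, u n) * (∑' n, v n) - ∑' n, u n * v n := by
  set A := fun n ↦ (∑ k ∈ range n, u k) * v n
  set B := fun n ↦ (∑ k ∈ range n, v k) * u n
  have hA0 (n : ℕ) : 0 ≤ A n := mul_nonneg (sum_nonneg fun k _ ↦ hu0 k) (hv0 n)
  have hB0 (n : ℕ) : 0 ≤ B n := mul_nonneg (sum_nonneg fun k _ ↦ hv0 k) (hu0 n)
  have hD0 (n : ℕ) : 0 ≤ u n * v n := mul_nonneg (hu0 n) (hv0 n)
  have hpartial (N : ℕ) : ∑ n ∈ range N, (A n + B n + u n * v n)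
      = (∑ k ∈ range N, u k) * ∑ k ∈ range N, v k := by
    induction N with
    | zero => simp
    | succ N ih => simp only [sum_range_succ, ih, A, B]; ring
  have htot : HasSum (fun n ↦ A n + B n + u n * v n) ((∑' n, u n) * ∑' n, v n) := by
    rw [hasSum_iff_tendsto_nat_of_nonneg (fun n ↦ by linarith [hA0 n, hB0 n, hD0 n])]
    simpa only [hpartial] using hu.hasSum.tendsto_sum_nat.mul hv.hasSum.tendsto_sum_nat
  have hA := htot.summable.of_nonneg_of_le hA0 fun n ↦ by linarith [hB0 n, hD0 n]
  have hB := htot.summable.of_nonneg_of_le hB0 fun n ↦ by linarith [hA0 n, hD0 n]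
  have hD := htot.summable.of_nonneg_of_le hD0 fun n ↦ by linarith [hA0 n, hB0 n]
  rw [← htot.tsum_eq, (hA.add hB).tsum_add hD, hA.tsum_add hB]
  ring

lemma inv_mul_add_pow_eq {K : Type*} [Field K] {a c : K} (ha : a ≠ 0) (hc : c ≠ 0)
    (hac : a + c ≠ 0) {q : ℕ} (hq : 1 ≤ q) :
    (a * (a + c) ^ q)⁻¹ = (c ^ q)⁻¹ * (a⁻¹ - (a + c)⁻¹)
      - ∑ i ∈ Icc 2 q, (c ^ (q + 1 - i))⁻¹ * ((a + c) ^ i)⁻¹ := by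
  induction q, hq using Nat.le_induction with
  | base =>
    rw [Icc_eq_empty (by norm_num), sum_empty, sub_zero, pow_one, pow_one]
    field_simp
    ring
  | succ q hq ih =>
    have hstep : (a * (a + c) ^ (q + 1))⁻¹
        = c⁻¹ * ((a * (a + c) ^ q)⁻¹ - ((a + c) ^ (q + 1))⁻¹) := by
      field_simp; ring
    have hsum : ∑ i ∈ Icc 2 (q + 1), (c ^ (q + 1 + 1 - i))⁻¹ * ((a + c) ^ i)⁻¹
        = c⁻¹ * ∑ i ∈ Icc 2 q, (c ^ (q + 1 - i))⁻¹ * ((a + c) ^ i)⁻¹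
          + c⁻¹ * ((a + c) ^ (q + 1))⁻¹ := by
      rw [sum_Icc_succ_top (by omega), mul_sum, Nat.add_sub_cancel_left, pow_one]
      congr 1
      refine sum_congr rfl fun i hi ↦ ?_
      rw [show q + 1 + 1 - i = q + 1 - i + 1 by grind, pow_succ, mul_inv]
      ring
    rw [hstep, ih, hsum, pow_succ, mul_inv]
    ring

lemma tendsto_harmonic_two_mul_sub_harmonic :
    Tendsto (fun N : ℕ ↦ (harmonic (2 * N) : ℝ) - harmonic N) atTop (𝓝 (Real.log 2)) := by
  have h2N : Tendsto (fun N : ℕ ↦ 2 * N) atTop atTop :=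
    tendsto_id.const_mul_atTop' (by norm_num)
  have hlim := ((Real.tendsto_harmonic_sub_log.comp h2N).sub
    Real.tendsto_harmonic_sub_log).add_const (Real.log 2)
  rw [sub_self, zero_add] at hlim
  refine hlim.congr' ?_
  filter_upwards [eventually_gt_atTop 0] with N hN
  simp only [Function.comp_apply, Nat.cast_mul, Nat.cast_ofNat]
  rw [Real.log_mul two_ne_zero (by positivity)]
  ring

noncomputable def halfInt (n : ℕ) : ℝ := n + 1 / 2

lemma halfInt_pos (n : ℕ) : 0 < halfInt n := by unfold halfInt; positivity

lemma inv_halfInt_pow_nonneg (p n : ℕ) : 0 ≤ (halfInt n ^ p)⁻¹ :=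
  inv_nonneg.2 (pow_nonneg (halfInt_pos n).le p)

lemma one_le_halfInt_succ (n : ℕ) : 1 ≤ halfInt (n + 1) := by
  unfold halfInt; push_cast; linarith [n.cast_nonneg (α := ℝ)]

lemma summable_halfInt_inv_pow {i : ℕ} (hi : 2 ≤ i) :
    Summable fun n ↦ (halfInt n ^ i)⁻¹ := by
  refine ((Real.summable_one_div_nat_add_rpow (1 / 2) i).2 (by exact_mod_cast hi)).congr
    fun n ↦ ?_
  rw [halfInt, abs_of_pos (by positivity), Real.rpow_natCast, one_div]

lemma inv_halfInt_pow_le {p : ℕ} (hp : 1 ≤ p) (m : ℕ) :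
    (halfInt m ^ p)⁻¹ ≤ 2 ^ p * ((m : ℝ) + 1)⁻¹ := by
  have h1 : 1 ≤ 2 * halfInt m := by unfold halfInt; linarith [m.cast_nonneg (α := ℝ)]
  calc (halfInt m ^ p)⁻¹ = 2 ^ p * ((2 * halfInt m) ^ p)⁻¹ := by
        rw [mul_pow, mul_inv, ← mul_assoc, mul_inv_cancel₀ (by positivity), one_mul]
    _ ≤ 2 ^ p * ((m : ℝ) + 1)⁻¹ := by
        gcongr
        calc (m : ℝ) + 1 ≤ 2 * halfInt m := by
              unfold halfInt; linarith [m.cast_nonneg (α := ℝ)]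
          _ ≤ (2 * halfInt m) ^ p := le_self_pow₀ h1 (by omega)

lemma inv_halfInt_succ_pow_le {i : ℕ} (hi : 2 ≤ i) (n : ℕ) :
    (halfInt (n + 1) ^ i)⁻¹ ≤ (halfInt (n + 1) ^ 2)⁻¹ :=
  inv_anti₀ (pow_pos (halfInt_pos _) 2) (pow_le_pow_right₀ (one_le_halfInt_succ n) hi)

lemma inv_halfInt_succ_sq_le (n : ℕ) :
    (halfInt (n + 1) ^ 2)⁻¹ ≤ ((n + 1 : ℕ) : ℝ)⁻¹ - ((n + 2 : ℕ) : ℝ)⁻¹ := by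
  have hprod : ((n + 1 : ℕ) : ℝ) * (n + 2 : ℕ) ≤ halfInt (n + 1) ^ 2 := by
    unfold halfInt; push_cast; nlinarith
  calc (halfInt (n + 1) ^ 2)⁻¹ ≤ (((n + 1 : ℕ) : ℝ) * (n + 2 : ℕ))⁻¹ :=
        inv_anti₀ (by positivity) hprod
    _ = ((n + 1 : ℕ) : ℝ)⁻¹ - ((n + 2 : ℕ) : ℝ)⁻¹ := by push_cast; field_simp; ring

lemma tsum_halfInt_inv_sq_tail_le (k : ℕ) :
    Summable (fun j ↦ (halfInt (k + j + 1) ^ 2)⁻¹) ∧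
      ∑' j, (halfInt (k + j + 1) ^ 2)⁻¹ ≤ ((k : ℝ) + 1)⁻¹ := by
  set f : ℕ → ℝ := fun j ↦ ((k + j + 1 : ℕ) : ℝ)⁻¹
  have htele : HasSum (fun j ↦ f j - f (j + 1)) ((k : ℝ) + 1)⁻¹ := by
    simpa [f] using hasSum_sub_add_of_antitone (f := f) (fun a b hab ↦ by simp only [f]; gcongr)
      (tendsto_inv_atTop_nhds_zero_nat.comp
        (tendsto_atTop_mono (fun j ↦ (by omega : j ≤ k + j + 1)) tendsto_id)) 1
  have hle (j : ℕ) : (halfInt (k + j + 1) ^ 2)⁻¹ ≤ f j - f (j + 1) :=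
    inv_halfInt_succ_sq_le (k + j)
  have hs := htele.summable.of_nonneg_of_le (fun j ↦ inv_halfInt_pow_nonneg 2 _) hle
  exact ⟨hs, hasSum_le hle hs.hasSum htele⟩

lemma summable_inv_succ_mul_inv_halfInt_sq :
    Summable fun x : ℕ × ℕ ↦
      ((x.1 : ℝ) + 1)⁻¹ * (halfInt (x.1 + x.2 + 1) ^ 2)⁻¹ := by
  have hnn : 0 ≤ fun x : ℕ × ℕ ↦
      ((x.1 : ℝ) + 1)⁻¹ * (halfInt (x.1 + x.2 + 1) ^ 2)⁻¹ :=
    fun x ↦ mul_nonneg (by positivity) (inv_halfInt_pow_nonneg 2 _)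
  refine (summable_prod_of_nonneg hnn).2 ⟨fun k ↦ ?_, ?_⟩
  · exact (tsum_halfInt_inv_sq_tail_le k).1.mul_left ((k : ℝ) + 1)⁻¹
  have hsq : Summable fun k : ℕ ↦ (((k : ℝ) + 1) ^ 2)⁻¹ := by
    simpa using (summable_nat_add_iff 1).2 (Real.summable_nat_pow_inv.2 one_lt_two)
  refine hsq.of_nonneg_of_le (fun k ↦ tsum_nonneg fun j ↦ hnn (k, j)) fun k ↦ ?_
  calc ∑' j, ((k : ℝ) + 1)⁻¹ * (halfInt (k + j + 1) ^ 2)⁻¹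
      = ((k : ℝ) + 1)⁻¹ * ∑' j, (halfInt (k + j + 1) ^ 2)⁻¹ := tsum_mul_left
    _ ≤ ((k : ℝ) + 1)⁻¹ * ((k : ℝ) + 1)⁻¹ := by
        gcongr; exact (tsum_halfInt_inv_sq_tail_le k).2
    _ = (((k : ℝ) + 1) ^ 2)⁻¹ := by rw [sq, mul_inv]

lemma sum_range_inv_halfInt_sub_inv_succ (N : ℕ) :
    ∑ k ∈ range N, ((halfInt k)⁻¹ - ((k : ℝ) + 1)⁻¹)
      = 2 * ((harmonic (2 * N) : ℝ) - harmonic N) := by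
  induction N with
  | zero => simp
  | succ N ih =>
    rw [sum_range_succ, ih, mul_add, mul_one, harmonic_succ, harmonic_succ, harmonic_succ]
    push_cast
    unfold halfInt
    field_simp
    ring

lemma hasSum_inv_halfInt_sub_inv_succ :
    HasSum (fun k ↦ (halfInt k)⁻¹ - ((k : ℝ) + 1)⁻¹) (2 * Real.log 2) := by
  refine (hasSum_iff_tendsto_nat_of_nonneg (fun k ↦ ?_) _).2 ?_
  · exact sub_nonneg.2 (inv_anti₀ (halfInt_pos k) (by unfold halfInt; linarith))
  · simpa only [sum_range_inv_halfInt_sub_inv_succ] using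
      tendsto_harmonic_two_mul_sub_harmonic.const_mul 2

lemma oddH_eq_sum (p n : ℕ) : oddH p n = ∑ k ∈ range n, (halfInt k ^ p)⁻¹ := rfl

lemma hasSum_inv_succ_sub_inv_halfInt (m : ℕ) :
    HasSum (fun k : ℕ ↦ ((k : ℝ) + 1)⁻¹ - (halfInt (m + k + 1))⁻¹)
      (oddH 1 (m + 1) - 2 * Real.log 2) := by
  have htele := hasSum_sub_add_of_antitone (f := fun k ↦ (halfInt k)⁻¹)
    (fun a b hab ↦ inv_anti₀ (halfInt_pos a) (by unfold halfInt; gcongr))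
    (tendsto_inv_atTop_zero.comp (tendsto_atTop_add_const_right _ _ tendsto_natCast_atTop_atTop))
    (m + 1)
  simp only [oddH_eq_sum, pow_one]
  refine (htele.sub hasSum_inv_halfInt_sub_inv_succ).congr_fun fun k ↦ ?_
  rw [show m + k + 1 = k + (m + 1) by ring]
  ring

lemma ttv_eq_tsum (s : ℕ) : ttv s = ∑' n, (halfInt n ^ s)⁻¹ := by
  simp only [ttv, halfInt]

lemma hasSum_ttv {s : ℕ} (hs : 2 ≤ s) : HasSum (fun n ↦ (halfInt n ^ s)⁻¹) (ttv s) :=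
  ttv_eq_tsum s ▸ (summable_halfInt_inv_pow hs).hasSum

noncomputable def ttvTail (i m : ℕ) : ℝ := ∑' j, (halfInt (m + j + 1) ^ i)⁻¹

lemma summable_ttvTail {i : ℕ} (hi : 2 ≤ i) (m : ℕ) :
    Summable fun j ↦ (halfInt (m + j + 1) ^ i)⁻¹ :=
  ((summable_nat_add_iff (m + 1)).2 (summable_halfInt_inv_pow hi)).congr fun j ↦ by
    rw [add_comm m j, add_assoc]

lemma Tsum_eq_tsum (p i : ℕ) :
    Tsum p i = ∑' n, (∑ k ∈ range n, (halfInt k ^ p)⁻¹) * (halfInt n ^ i)⁻¹ := by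
  simp only [Tsum, oddH_eq_sum, div_eq_mul_inv, halfInt]

lemma summable_Tsum_prod {p i : ℕ} (hp : 1 ≤ p) (hi : 2 ≤ i) :
    Summable fun x : ℕ × ℕ ↦
      (halfInt x.1 ^ p)⁻¹ * (halfInt (x.1 + x.2 + 1) ^ i)⁻¹ := by
  refine (summable_inv_succ_mul_inv_halfInt_sq.mul_left (2 ^ p)).of_nonneg_of_le
    (fun x ↦ mul_nonneg (inv_halfInt_pow_nonneg _ _) (inv_halfInt_pow_nonneg _ _)) fun x ↦ ?_
  rw [← mul_assoc]
  exact mul_le_mul (inv_halfInt_pow_le hp x.1) (inv_halfInt_succ_pow_le hi _)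
    (inv_halfInt_pow_nonneg _ _) (by positivity)

lemma hasSum_Tsum_prod {p i : ℕ} (hp : 1 ≤ p) (hi : 2 ≤ i) :
    HasSum (fun x : ℕ × ℕ ↦ (halfInt x.1 ^ p)⁻¹ * (halfInt (x.1 + x.2 + 1) ^ i)⁻¹)
      (Tsum p i) := by
  have h := (summable_Tsum_prod hp hi).hasSum
  rwa [Tsum_eq_tsum, (h.sum_range_mul (u := fun k ↦ (halfInt k ^ p)⁻¹)
    (v := fun n ↦ (halfInt n ^ i)⁻¹)).tsum_eq]

lemma hasSum_Tsum {p i : ℕ} (hp : 1 ≤ p) (hi : 2 ≤ i) :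
    HasSum (fun n ↦ oddH p n / halfInt n ^ i) (Tsum p i) := by
  simpa only [oddH_eq_sum, div_eq_mul_inv] using (hasSum_Tsum_prod hp hi).sum_range_mul
    (u := fun k ↦ (halfInt k ^ p)⁻¹) (v := fun n ↦ (halfInt n ^ i)⁻¹)

lemma hasSum_inv_pow_mul_ttvTail {p i : ℕ} (hp : 1 ≤ p) (hi : 2 ≤ i) :
    HasSum (fun m ↦ (halfInt m ^ p)⁻¹ * ttvTail i m) (Tsum p i) :=
  (hasSum_Tsum_prod hp hi).prod_fiberwise fun m ↦ (summable_ttvTail hi m).hasSum.mul_left _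

lemma Tsum_add_Tsum {p i : ℕ} (hp : 2 ≤ p) (hi : 2 ≤ i) :
    Tsum p i + Tsum i p = ttv p * ttv i - ttv (p + i) := by
  simp only [Tsum_eq_tsum, ttv_eq_tsum, pow_add, mul_inv]
  exact tsum_sum_range_mul_add_tsum_sum_range_mul (inv_halfInt_pow_nonneg p)
    (inv_halfInt_pow_nonneg i) (summable_halfInt_inv_pow hp) (summable_halfInt_inv_pow hi)

lemma Rsum_one_eq_tsum (q : ℕ) :
    Rsum 1 q = ∑' n, (∑ k ∈ range n, (((k : ℝ) + 1) ^ 1)⁻¹) * (halfInt n ^ q)⁻¹ := by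
  simp only [Rsum, genH, div_eq_mul_inv, halfInt]

lemma summable_Rsum_one_prod {q : ℕ} (hq : 2 ≤ q) :
    Summable fun x : ℕ × ℕ ↦
      (((x.1 : ℝ) + 1) ^ 1)⁻¹ * (halfInt (x.1 + x.2 + 1) ^ q)⁻¹ := by
  refine summable_inv_succ_mul_inv_halfInt_sq.of_nonneg_of_le
    (fun x ↦ mul_nonneg (by positivity) (inv_halfInt_pow_nonneg _ _)) fun x ↦ ?_
  rw [pow_one]
  exact mul_le_mul_of_nonneg_left (inv_halfInt_succ_pow_le hq _) (by positivity)

lemma hasSum_Rsum_one_fiber {q : ℕ} (hq : 1 ≤ q) (m : ℕ) :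
    HasSum (fun k : ℕ ↦ (((k : ℝ) + 1) ^ 1)⁻¹ * (halfInt (m + k + 1) ^ q)⁻¹)
      ((halfInt m ^ q)⁻¹ * (oddH 1 (m + 1) - 2 * Real.log 2)
        - ∑ i ∈ Icc 2 q, (halfInt m ^ (q + 1 - i))⁻¹ * ttvTail i m) := by
  have htails : HasSum
      (fun k ↦ ∑ i ∈ Icc 2 q, (halfInt m ^ (q + 1 - i))⁻¹ * (halfInt (m + k + 1) ^ i)⁻¹)
      (∑ i ∈ Icc 2 q, (halfInt m ^ (q + 1 - i))⁻¹ * ttvTail i m) :=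
    hasSum_sum fun i hi ↦ (summable_ttvTail (mem_Icc.1 hi).1 m).hasSum.mul_left _
  refine (((hasSum_inv_succ_sub_inv_halfInt m).mul_left _).sub htails).congr_fun fun k ↦ ?_
  have hsplit : halfInt (m + k + 1) = ((k : ℝ) + 1) + halfInt m := by
    unfold halfInt; push_cast; ring
  rw [hsplit, pow_one, ← mul_inv, inv_mul_add_pow_eq (by positivity) (halfInt_pos m).ne'
    (by have := halfInt_pos m; positivity) hq]

lemma hasSum_Rsum_one {q : ℕ} (hq : 2 ≤ q) :
    HasSum (fun m ↦ (halfInt m ^ q)⁻¹ * (oddH 1 (m + 1) - 2 * Real.log 2)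
        - ∑ i ∈ Icc 2 q, (halfInt m ^ (q + 1 - i))⁻¹ * ttvTail i m) (Rsum 1 q) := by
  have h := (summable_Rsum_one_prod hq).hasSum
  rw [Rsum_one_eq_tsum, (h.sum_range_mul (u := fun k ↦ (((k : ℝ) + 1) ^ 1)⁻¹)
    (v := fun n ↦ (halfInt n ^ q)⁻¹)).tsum_eq]
  refine ((Equiv.prodComm ℕ ℕ).hasSum_iff.2 h).prod_fiberwise fun m ↦
    (hasSum_Rsum_one_fiber (by omega) m).congr_fun fun k ↦ ?_
  simp only [Function.comp_apply, Equiv.prodComm_apply, Prod.fst_swap, Prod.snd_swap,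
    add_comm k m]

lemma Rsum_one_eq_Tsum {q : ℕ} (hq : 2 ≤ q) :
    Rsum 1 q = Tsum 1 q + ttv (q + 1) - 2 * Real.log 2 * ttv q
      - ∑ i ∈ Icc 2 q, Tsum (q + 1 - i) i := by
  have hodd : HasSum (fun m ↦ (halfInt m ^ q)⁻¹ * oddH 1 (m + 1)) (Tsum 1 q + ttv (q + 1)) :=
    ((hasSum_Tsum le_rfl hq).add (hasSum_ttv (by omega))).congr_fun fun m ↦ by
      rw [oddH_eq_sum, sum_range_succ, ← oddH_eq_sum, pow_one, div_eq_mul_inv, pow_succ, mul_inv]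
      ring
  have hlog : HasSum (fun m ↦ (halfInt m ^ q)⁻¹ * (2 * Real.log 2)) (2 * Real.log 2 * ttv q) :=
    mul_comm (ttv q) _ ▸ (hasSum_ttv hq).mul_right _
  have htails : HasSum (fun m ↦ ∑ i ∈ Icc 2 q, (halfInt m ^ (q + 1 - i))⁻¹ * ttvTail i m)
      (∑ i ∈ Icc 2 q, Tsum (q + 1 - i) i) :=
    hasSum_sum fun i hi ↦ hasSum_inv_pow_mul_ttvTail (by grind) (mem_Icc.1 hi).1
  exact (hasSum_Rsum_one hq).unique (((hodd.sub hlog).sub htails).congr_fun fun m ↦ by ring)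

lemma two_mul_sum_Tsum_eq {q : ℕ} (hq : 2 ≤ q) :
    2 * ∑ i ∈ Icc 2 (q - 1), Tsum (q + 1 - i) i
      = ∑ j ∈ Icc 1 (q - 2), ttv (q - j) * ttv (j + 1) - ((q : ℝ) - 2) * ttv (q + 1) := by
  have hreflect : ∑ i ∈ Icc 2 (q - 1), Tsum (q + 1 - i) i
      = ∑ i ∈ Icc 2 (q - 1), Tsum i (q + 1 - i) :=
    sum_nbij' (q + 1 - ·) (q + 1 - ·) (by grind) (by grind) (by grind) (by grind)
      fun i hi ↦ by rw [show q + 1 - (q + 1 - i) = i by grind]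
  have hshift : ∑ j ∈ Icc 1 (q - 2), ttv (q - j) * ttv (j + 1)
      = ∑ i ∈ Icc 2 (q - 1), ttv (q + 1 - i) * ttv i :=
    sum_nbij' (· + 1) (· - 1) (by grind) (by grind) (by grind) (by grind)
      fun j hj ↦ by rw [show q + 1 - (j + 1) = q - j by grind]
  have hcard : ((q - 1 + 1 - 2 : ℕ) : ℝ) = q - 2 := by
    rw [show q - 1 + 1 - 2 = q - 2 by omega, Nat.cast_sub hq, Nat.cast_ofNat]
  calc 2 * ∑ i ∈ Icc 2 (q - 1), Tsum (q + 1 - i) i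
      = ∑ i ∈ Icc 2 (q - 1), (Tsum (q + 1 - i) i + Tsum i (q + 1 - i)) := by
        rw [sum_add_distrib, ← hreflect, two_mul]
    _ = ∑ i ∈ Icc 2 (q - 1), (ttv (q + 1 - i) * ttv i - ttv (q + 1)) :=
        sum_congr rfl fun i hi ↦ by
          rw [Tsum_add_Tsum (by grind) (by grind), show q + 1 - i + i = q + 1 by grind]
    _ = _ := by rw [sum_sub_distrib, sum_const, Nat.card_Icc, nsmul_eq_mul, hcard, hshift]

theorem stmt3 (q : ℕ) (hq : 2 ≤ q) :
    Rsum 1 q =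
      (q : ℝ) / 2 * ttv (q + 1) - 2 * Real.log 2 * ttv q
        - 1 / 2 * ∑ j ∈ Finset.Icc 1 (q - 2), ttv (q - j) * ttv (j + 1) := by
  have hsplit : ∑ i ∈ Icc 2 q, Tsum (q + 1 - i) i
      = ∑ i ∈ Icc 2 (q - 1), Tsum (q + 1 - i) i + Tsum 1 q := by
    have h := sum_Icc_succ_top (show 2 ≤ q - 1 + 1 by omega) fun i ↦ Tsum (q + 1 - i) i
    rwa [Nat.sub_add_cancel (by omega), show q + 1 - q = 1 by omega] at h
  rw [Rsum_one_eq_Tsum hq, hsplit]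
  linarith [two_mul_sum_Tsum_eq hq]
end

section
/- T_{2,2} − 2S̃_{1,3} − S̃_{2,2} = −π⁴/12, where T_{p,q} = ∑_{n≥1} h_{n-1}^{(p)}/(n−1/2)^q and S̃_{p,q} = ∑_{n≥1} h_n^{(p)}/n^q, with h_n^{(r)} = ∑_{k=1}^n 1/(k−1/2)^r. -/
/-!
With `x_k = k + 1/2`, the values `∑ x_k⁻² = π²/2` and `∑ x_k⁻⁴ = π⁴/6` come from `ζ(2)` and `ζ(4)`.
The square `(∑ x_k⁻²)² = ∑_{k,j} x_k⁻² x_j⁻²` is evaluated in two ways. Splitting into `k < j`,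
`k = j`, `k > j` (a telescoping of squared partial sums) gives `2 T_{2,2} + π⁴/6`. Summing along the
antidiagonals `k + j = n`, where `x_k + x_j = n + 1`, the partial fraction identity
`1/(x²y²) = (1/x² + 1/y²)/(x+y)² + 2(1/x + 1/y)/(x+y)³` gives `2 S̃_{2,2} + 4 S̃_{1,3}`.
-/

open Finset Real

lemma hasSum_inv_add_half_pow {s : ℕ} {z : ℝ} (hz : HasSum (fun n : ℕ => 1 / (n : ℝ) ^ s) z) :
    HasSum (fun n : ℕ => (((n : ℝ) + 1/2) ^ s)⁻¹) ((2 ^ s - 1) * z) := by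
  set g : ℕ → ℝ := fun n => 1 / (n : ℝ) ^ s
  have heven : HasSum (fun k => g (2 * k)) (z / 2 ^ s) :=
    (hz.div_const (2 ^ s)).congr_fun fun k => by
      simp only [g, Nat.cast_mul, Nat.cast_ofNat, mul_pow]
      ring
  have hodd : Summable fun k => g (2 * k + 1) :=
    hz.summable.comp_injective fun a b h => by simpa using h
  have hodd_sum : ∑' k, g (2 * k + 1) = z - z / 2 ^ s := by
    linarith [tsum_even_add_odd heven.summable hodd, heven.tsum_eq, hz.tsum_eq]
  rw [show (2 ^ s - 1) * z = 2 ^ s * (z - z / 2 ^ s) by field_simp, ← hodd_sum]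
  refine (hodd.hasSum.mul_left (2 ^ s)).congr_fun fun n => ?_
  simp only [g, Nat.cast_add, Nat.cast_mul, Nat.cast_ofNat, Nat.cast_one]
  rw [show (2 : ℝ) * n + 1 = 2 * (n + 1/2) by ring, mul_pow]
  field_simp

lemma hasSum_inv_add_half_sq : HasSum (fun n : ℕ => (((n : ℝ) + 1/2) ^ 2)⁻¹) (π ^ 2 / 2) := by
  convert hasSum_inv_add_half_pow hasSum_zeta_two using 1
  ring

lemma hasSum_inv_add_half_pow_four :
    HasSum (fun n : ℕ => (((n : ℝ) + 1/2) ^ 4)⁻¹) (π ^ 4 / 6) := by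
  convert hasSum_inv_add_half_pow hasSum_zeta_four using 1
  ring

lemma hasSum_mul_two_mul_sum_range_add {f : ℕ → ℝ} {a : ℝ} (hf : HasSum f a) (h0 : ∀ n, 0 ≤ f n) :
    HasSum (fun n => f n * (2 * ∑ k ∈ range n, f k + f n)) (a ^ 2) := by
  have htel (N : ℕ) :
      ∑ n ∈ range N, f n * (2 * ∑ k ∈ range n, f k + f n) = (∑ k ∈ range N, f k) ^ 2 := by
    induction N with
    | zero => simp
    | succ N ih => rw [sum_range_succ, ih, sum_range_succ]; ring
  have hterm (n : ℕ) : 0 ≤ f n * (2 * ∑ k ∈ range n, f k + f n) :=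
    mul_nonneg (h0 n) (add_nonneg (mul_nonneg zero_le_two (sum_nonneg fun k _ => h0 k)) (h0 n))
  rw [hasSum_iff_tendsto_nat_of_nonneg hterm]
  simp only [htel]
  exact hf.tendsto_sum_nat.pow 2

lemma inv_sq_mul_inv_sq_eq {K : Type*} [Field K] {x y : K} (hx : x ≠ 0) (hy : y ≠ 0)
    (hxy : x + y ≠ 0) :
    (x ^ 2)⁻¹ * (y ^ 2)⁻¹
      = ((x ^ 2)⁻¹ + (y ^ 2)⁻¹) / (x + y) ^ 2 + 2 * (x⁻¹ + y⁻¹) / (x + y) ^ 3 := by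
  field_simp
  ring

lemma Finset.Nat.sum_antidiagonal_fst_add_snd {R : Type*} [Semiring R] (g : ℕ → R) (n : ℕ) :
    ∑ p ∈ antidiagonal n, (g p.1 + g p.2) = 2 * ∑ k ∈ range (n + 1), g k := by
  have hswap := Nat.sum_antidiagonal_swap (n := n) (f := fun p => g p.1)
  simp only [Prod.fst_swap] at hswap
  rw [sum_add_distrib, hswap, ← two_mul, Nat.sum_antidiagonal_eq_sum_range_succ_mk]

lemma sum_antidiagonal_inv_add_half_sq_mul (n : ℕ) :
    ∑ p ∈ antidiagonal n, (((p.1 : ℝ) + 1/2) ^ 2)⁻¹ * (((p.2 : ℝ) + 1/2) ^ 2)⁻¹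
      = 2 * (oddH 2 (n + 1) / ((n : ℝ) + 1) ^ 2) + 4 * (oddH 1 (n + 1) / ((n : ℝ) + 1) ^ 3) := by
  have hsum (p : ℕ × ℕ) (hp : p ∈ antidiagonal n) : (p.1 : ℝ) + 1/2 + ((p.2 : ℝ) + 1/2) = n + 1 := by
    rw [← mem_antidiagonal.mp hp]; push_cast; ring
  rw [sum_congr rfl fun p hp => by
    rw [inv_sq_mul_inv_sq_eq (by positivity) (by positivity) (by positivity), hsum p hp]]
  rw [sum_add_distrib, ← sum_div, ← sum_div, ← mul_sum,
    Nat.sum_antidiagonal_fst_add_snd (fun k => (((k : ℝ) + 1/2) ^ 2)⁻¹),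
    Nat.sum_antidiagonal_fst_add_snd (fun k => ((k : ℝ) + 1/2)⁻¹)]
  simp only [oddH, pow_one]
  ring

lemma two_mul_Tsum_two_two_add : 2 * Tsum 2 2 + π ^ 4 / 6 = (π ^ 2 / 2) ^ 2 := by
  have h := hasSum_mul_two_mul_sum_range_add hasSum_inv_add_half_sq fun n => by positivity
  have hT : HasSum (fun n => oddH 2 n / ((n : ℝ) + 1/2) ^ 2) (((π ^ 2 / 2) ^ 2 - π ^ 4 / 6) / 2) :=
    ((h.sub hasSum_inv_add_half_pow_four).div_const 2).congr_fun fun n => by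
      simp only [oddH]
      generalize (n : ℝ) + 1/2 = x
      ring
  rw [Tsum, hT.tsum_eq]
  ring

lemma two_mul_Ssum_two_two_add : 2 * Ssum 2 2 + 4 * Ssum 1 3 = (π ^ 2 / 2) ^ 2 := by
  set f : ℕ → ℝ := fun k => (((k : ℝ) + 1/2) ^ 2)⁻¹
  have hf : Summable f := hasSum_inv_add_half_sq.summable
  have hff : Summable fun p : ℕ × ℕ => f p.1 * f p.2 :=
    hf.mul_of_nonneg hf (fun _ => by positivity) fun _ => by positivity
  have hcauchy := hf.tsum_mul_tsum_eq_tsum_sum_antidiagonal hf hff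
  have hsum := summable_sum_mul_antidiagonal_of_summable_mul hff
  simp only [f, sum_antidiagonal_inv_add_half_sq_mul] at hcauchy hsum
  set a : ℕ → ℝ := fun n => oddH 2 (n + 1) / ((n : ℝ) + 1) ^ 2
  set b : ℕ → ℝ := fun n => oddH 1 (n + 1) / ((n : ℝ) + 1) ^ 3
  have ha0 (n : ℕ) : 0 ≤ a n := by simp only [a, oddH]; positivity
  have hb0 (n : ℕ) : 0 ≤ b n := by simp only [b, oddH]; positivity
  have ha : Summable a :=
    (hsum.div_const 2).of_nonneg_of_le ha0 fun n => by linarith [hb0 n]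
  have hb : Summable b :=
    (hsum.div_const 4).of_nonneg_of_le hb0 fun n => by linarith [ha0 n]
  rw [hasSum_inv_add_half_sq.tsum_eq, (ha.mul_left 2).tsum_add (hb.mul_left 4),
    tsum_mul_left, tsum_mul_left] at hcauchy
  rw [sq, hcauchy]
  rfl

theorem stmt7 : Tsum 2 2 - 2 * Ssum 1 3 - Ssum 2 2 = -Real.pi ^ 4 / 12 := by
  linear_combination (two_mul_Tsum_two_two_add - two_mul_Ssum_two_two_add) / 2
end

section
/- T_{3,3} + 6S̃_{1,5} + 3S̃_{2,4} + S̃_{3,3} = 49ζ(3)² − π⁶/30, where T_{p,q} = ∑_{n≥1} h_{n-1}^{(p)}/(n−1/2)^q and S̃_{p,q} = ∑_{n≥1} h_n^{(p)}/n^q, with h_n^{(r)} = ∑_{k=1}^n 1/(k−1/2)^r. -/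
/-! Put `a n = (n + 1/2)⁻³`, so that `t̃(3) = ∑ a n`, and expand `t̃(3)²` in two ways.
Splitting the double sum into its off-diagonal and diagonal parts gives `2 T_{3,3} + t̃(6)`.
Grouping instead by `k + l = n` (the Cauchy product) and decomposing `1/(x³y³)` into
partial fractions along `x + y = n + 1` gives `12 S̃_{1,5} + 6 S̃_{2,4} + 2 S̃_{3,3}`.
The two expansions, together with `t̃(s) = (2^s - 1) ζ(s)` and `ζ(6) = π⁶/945`, give the
identity. -/

open Finset

lemma hasSum_inv_nat_pow_zv {s : ℕ} (hs : 1 < s) :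
    HasSum (fun n : ℕ => ((n : ℝ) ^ s)⁻¹) (zv s) := by
  have hz : Summable fun n : ℕ => (((n : ℝ) + 1) ^ s)⁻¹ := by
    exact_mod_cast (summable_nat_add_iff 1).2 (Real.summable_nat_pow_inv.2 hs)
  rw [← hasSum_nat_add_iff' 1, sum_range_one, Nat.cast_zero, zero_pow (by omega), inv_zero,
    sub_zero]
  push_cast
  exact hz.hasSum

lemma hasSum_inv_nat_add_half_pow {s : ℕ} (hs : 1 < s) :
    HasSum (fun n : ℕ => (((n : ℝ) + 1/2) ^ s)⁻¹) ((2 ^ s - 1) * zv s) := by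
  set G : ℕ → ℝ := fun n => ((n : ℝ) ^ s)⁻¹
  have hG : HasSum G (zv s) := hasSum_inv_nat_pow_zv hs
  have heven : HasSum (fun k => G (2 * k)) ((2 ^ s)⁻¹ * zv s) :=
    (hG.mul_left _).congr_fun fun k => by simp [G, mul_pow, mul_comm]
  have hodd : Summable fun k => G (2 * k + 1) :=
    hG.summable.comp_injective fun a b h => by simpa using h
  have hodd_sum : ∑' k, G (2 * k + 1) = zv s - (2 ^ s)⁻¹ * zv s := by
    have := tsum_even_add_odd heven.summable hodd
    rw [heven.tsum_eq, hG.tsum_eq] at this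
    linarith
  have hodd_eq (k : ℕ) : (((k : ℝ) + 1/2) ^ s)⁻¹ = 2 ^ s * G (2 * k + 1) := by
    simp only [G]; push_cast
    rw [show (2 : ℝ) * k + 1 = 2 * (k + 1/2) by ring, mul_pow]; field_simp
  simp_rw [hodd_eq]
  rw [show (2 ^ s - 1) * zv s = 2 ^ s * (zv s - (2 ^ s)⁻¹ * zv s) by field_simp, ← hodd_sum]
  exact hodd.hasSum.mul_left _

lemma ttv_eq_mul_zv {s : ℕ} (hs : 1 < s) : ttv s = (2 ^ s - 1) * zv s :=
  (hasSum_inv_nat_add_half_pow hs).tsum_eq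

lemma bernoulli'_six : bernoulli' 6 = 1 / 42 := by
  rw [bernoulli'_def]
  norm_num [sum_range_succ, Nat.choose,
    bernoulli'_eq_zero_of_odd (by decide : Odd 5) (by norm_num)]

lemma zv_six : zv 6 = Real.pi ^ 6 / 945 := by
  refine (hasSum_inv_nat_pow_zv (by norm_num)).unique ?_
  convert hasSum_zeta_nat (k := 3) (by norm_num) using 1
  · simp
  · rw [bernoulli_eq_bernoulli'_of_ne_one (by decide), bernoulli'_six]
    simp [Nat.factorial]
    ring

lemma hasSum_two_mul_sum_range_mul_add_sq {f : ℕ → ℝ} (hf : ∀ n, 0 ≤ f n)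
    (hs : Summable f) :
    HasSum (fun n => 2 * ((∑ k ∈ range n, f k) * f n) + f n ^ 2) ((∑' n, f n) ^ 2) := by
  have hterm (n : ℕ) : 0 ≤ 2 * ((∑ k ∈ range n, f k) * f n) + f n ^ 2 := by
    have := sum_nonneg fun k (_ : k ∈ range n) => hf k
    have := hf n
    positivity
  have hpartial (N : ℕ) : ∑ n ∈ range N, (2 * ((∑ k ∈ range n, f k) * f n) + f n ^ 2)
      = (∑ k ∈ range N, f k) ^ 2 := by
    induction N with
    | zero => simp
    | succ N ih => rw [sum_range_succ, ih, sum_range_succ]; ring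
  rw [hasSum_iff_tendsto_nat_of_nonneg hterm]
  simpa only [hpartial] using hs.hasSum.tendsto_sum_nat.pow 2

lemma two_mul_Tsum_self_add_ttv_two_mul {p : ℕ} (hp : 1 < p) :
    2 * Tsum p p + ttv (2 * p) = ttv p ^ 2 := by
  set f : ℕ → ℝ := fun n => (((n : ℝ) + 1/2) ^ p)⁻¹
  have h : HasSum (fun n => 2 * (oddH p n / ((n : ℝ) + 1/2) ^ p) + f n ^ 2) (ttv p ^ 2) :=
    hasSum_two_mul_sum_range_mul_add_sq (fun n => by positivity)
      (hasSum_inv_nat_add_half_pow hp).summable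
  have hsq : HasSum (fun n => f n ^ 2) (ttv (2 * p)) := by
    rw [ttv]
    simpa only [f, ← inv_pow, ← pow_mul, mul_comm p] using
      (hasSum_inv_nat_add_half_pow (s := 2 * p) (by omega)).summable.hasSum
  have hT : HasSum (fun n => 2 * (oddH p n / ((n : ℝ) + 1/2) ^ p))
      (ttv p ^ 2 - ttv (2 * p)) := by
    simpa only [add_sub_cancel_right] using h.sub hsq
  rw [Tsum, ← tsum_mul_left, hT.tsum_eq]
  ring

lemma inv_pow_three_mul_inv_pow_three {K : Type*} [Field K] {x y : K} (hx : x ≠ 0)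
    (hy : y ≠ 0) (hxy : x + y ≠ 0) :
    (x ^ 3)⁻¹ * (y ^ 3)⁻¹ = 6 / (x + y) ^ 5 * (x⁻¹ + y⁻¹) +
      3 / (x + y) ^ 4 * ((x ^ 2)⁻¹ + (y ^ 2)⁻¹) + 1 / (x + y) ^ 3 * ((x ^ 3)⁻¹ + (y ^ 3)⁻¹) := by
  field_simp
  ring

lemma sum_antidiagonal_inv_pow_add_inv_pow (j n : ℕ) :
    ∑ ij ∈ antidiagonal n, ((((ij.1 : ℝ) + 1/2) ^ j)⁻¹ + (((ij.2 : ℝ) + 1/2) ^ j)⁻¹) =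
      2 * oddH j (n + 1) := by
  have hswap : ∑ ij ∈ antidiagonal n, (((ij.2 : ℝ) + 1/2) ^ j)⁻¹ =
      ∑ ij ∈ antidiagonal n, (((ij.1 : ℝ) + 1/2) ^ j)⁻¹ :=
    Nat.sum_antidiagonal_swap (f := fun ij => (((ij.1 : ℝ) + 1/2) ^ j)⁻¹)
  rw [sum_add_distrib, hswap, Nat.sum_antidiagonal_eq_sum_range_succ_mk, two_mul]
  rfl

lemma sum_antidiagonal_inv_pow_three (n : ℕ) :
    ∑ ij ∈ antidiagonal n, (((ij.1 : ℝ) + 1/2) ^ 3)⁻¹ * (((ij.2 : ℝ) + 1/2) ^ 3)⁻¹ =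
      12 * (oddH 1 (n + 1) / ((n : ℝ) + 1) ^ 5) + 6 * (oddH 2 (n + 1) / ((n : ℝ) + 1) ^ 4) +
        2 * (oddH 3 (n + 1) / ((n : ℝ) + 1) ^ 3) := by
  have hpair : ∀ ij ∈ antidiagonal n, ((ij.1 : ℝ) + 1/2) + ((ij.2 : ℝ) + 1/2) = n + 1 := by
    intro ij hij
    rw [← Finset.HasAntidiagonal.mem_antidiagonal.mp hij]
    push_cast
    ring
  rw [sum_congr rfl fun ij hij => by
    rw [inv_pow_three_mul_inv_pow_three (by positivity) (by positivity) (by positivity),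
      hpair ij hij]]
  have h1 := sum_antidiagonal_inv_pow_add_inv_pow 1 n
  simp only [pow_one] at h1
  rw [sum_add_distrib, sum_add_distrib, ← mul_sum, ← mul_sum, ← mul_sum, h1,
    sum_antidiagonal_inv_pow_add_inv_pow, sum_antidiagonal_inv_pow_add_inv_pow]
  ring

lemma ttv_three_sq : ttv 3 ^ 2 = 12 * Ssum 1 5 + 6 * Ssum 2 4 + 2 * Ssum 3 3 := by
  set f : ℕ → ℝ := fun n => (((n : ℝ) + 1/2) ^ 3)⁻¹
  set S : ℕ → ℕ → ℕ → ℝ := fun p q n => oddH p (n + 1) / ((n : ℝ) + 1) ^ q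
  have hf : Summable fun n => ‖f n‖ :=
    summable_norm_iff.2 (hasSum_inv_nat_add_half_pow (by norm_num)).summable
  set c : ℕ → ℝ := fun n => 12 * S 1 5 n + 6 * S 2 4 n + 2 * S 3 3 n
  have hcauchy : HasSum c (ttv 3 ^ 2) := by
    have h := (summable_norm_sum_mul_antidiagonal_of_summable_norm hf hf).of_norm.hasSum
    rw [← tsum_mul_tsum_eq_tsum_sum_antidiagonal_of_summable_norm hf hf, ← sq] at h
    simp only [f, sum_antidiagonal_inv_pow_three] at h
    exact h
  have hS_nonneg (p q n : ℕ) : 0 ≤ S p q n :=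
    div_nonneg (sum_nonneg fun _ _ => by positivity) (by positivity)
  have hle (n : ℕ) : S 1 5 n ≤ c n ∧ S 2 4 n ≤ c n ∧ S 3 3 n ≤ c n := by
    have := hS_nonneg 1 5 n
    have := hS_nonneg 2 4 n
    have := hS_nonneg 3 3 n
    refine ⟨?_, ?_, ?_⟩ <;> simp only [c] <;> linarith
  have hS {p q : ℕ} (hpq : ∀ n, S p q n ≤ c n) : HasSum (S p q) (Ssum p q) :=
    (hcauchy.summable.of_nonneg_of_le (hS_nonneg p q) hpq).hasSum
  exact hcauchy.unique <| (((hS fun n => (hle n).1).mul_left 12).add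
    ((hS fun n => (hle n).2.1).mul_left 6)).add ((hS fun n => (hle n).2.2).mul_left 2)

theorem stmt8 : Tsum 3 3 + 6 * Ssum 1 5 + 3 * Ssum 2 4 + Ssum 3 3 = 49 * zv 3 ^ 2 - Real.pi ^ 6 / 30 := by
  have hT := two_mul_Tsum_self_add_ttv_two_mul (p := 3) (by norm_num)
  have hS := ttv_three_sq
  rw [ttv_eq_mul_zv (s := 3) (by norm_num)] at hT hS
  rw [ttv_eq_mul_zv (by norm_num), zv_six] at hT
  norm_num at hT hS
  linarith
end

section
/- T_{2,3} + T_{3,2} + S̃_{2,3} + S̃_{3,2} = (7/3)π²ζ(3), where T_{p,q} = ∑_{n≥1} h_{n-1}^{(p)}/(n−1/2)^q and S̃_{p,q} = ∑_{n≥1} h_n^{(p)}/n^q, with h_n^{(r)} = ∑_{k=1}^n 1/(k−1/2)^r. -/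
/-!
Each of the products t̃(2) ζ(3) and t̃(3) ζ(2) is a double series that can be expanded in two
ways. Splitting the grid along its diagonal (stuffle) gives t̃(2) ζ(3) = S̃_{2,3} + R_{3,2} and
t̃(3) ζ(2) = S̃_{3,2} + R_{2,3}. Decomposing 1/(x² y³) into partial fractions in x and x + y
(shuffle), where x + y is again a half-integer, writes the same products through T and R only.
Eliminating R leaves T_{2,3} + T_{3,2} + S̃_{2,3} + S̃_{3,2} = 2 t̃(3) ζ(2), and
t̃(3) = 7 ζ(3) (split ζ(3) into odd and even terms), ζ(2) = π²/6.
-/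

open Finset

noncomputable def hurwitzTerm (a : ℝ) (s n : ℕ) : ℝ := (((n : ℝ) + a) ^ s)⁻¹

noncomputable def nestedSum (f g : ℕ → ℝ) : ℝ := ∑' n, (∑ i ∈ range n, f i) * g n

section Triangles

variable {f g : ℕ → ℝ}

theorem HasSum.sum_antidiagonal {M A : Type*} [AddCommMonoid M] [TopologicalSpace M]
    [ContinuousAdd M] [RegularSpace M] [AddCommMonoid A] [HasAntidiagonal A]
    {F : A × A → M} {a : M} (h : HasSum F a) :
    HasSum (fun n ↦ ∑ p ∈ antidiagonal n, F p) a :=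
  (HasAntidiagonal.sigmaAntidiagonalEquivProd.hasSum_iff.mpr h).sigma fun n ↦
    (antidiagonal n).hasSum fun p ↦ F p

theorem hasSum_sum_range_succ_mul {a : ℝ}
    (h : HasSum (fun p : ℕ × ℕ ↦ f p.1 * g (p.1 + p.2)) a) :
    HasSum (fun n ↦ (∑ i ∈ range (n + 1), f i) * g n) a := by
  refine h.sum_antidiagonal.congr_fun fun n ↦ ?_
  rw [Nat.sum_antidiagonal_eq_sum_range_succ_mk, sum_mul]
  refine sum_congr rfl fun i hi ↦ ?_
  rw [Nat.add_sub_cancel' (Nat.le_of_lt_succ (mem_range.mp hi))]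

theorem hasSum_nestedSum (h : Summable fun p : ℕ × ℕ ↦ f p.1 * g (p.1 + p.2 + 1)) :
    HasSum (fun p : ℕ × ℕ ↦ f p.1 * g (p.1 + p.2 + 1)) (nestedSum f g) := by
  have hrow := (hasSum_nat_add_iff 1 (f := fun n ↦ (∑ i ∈ range n, f i) * g n)).mp
    (hasSum_sum_range_succ_mul (g := fun n ↦ g (n + 1)) h.hasSum)
  simp only [range_one, sum_singleton, range_zero, sum_empty, zero_mul, add_zero] at hrow
  rw [nestedSum, hrow.tsum_eq]
  exact h.hasSum

theorem hasSum_nestedSum' (h : Summable fun p : ℕ × ℕ ↦ f p.2 * g (p.1 + p.2 + 1)) :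
    HasSum (fun p : ℕ × ℕ ↦ f p.2 * g (p.1 + p.2 + 1)) (nestedSum f g) := by
  have hswap : (fun p : ℕ × ℕ ↦ f p.2 * g (p.1 + p.2 + 1)) ∘ Equiv.prodComm ℕ ℕ =
      fun p ↦ f p.1 * g (p.1 + p.2 + 1) := by
    funext p
    simp only [Function.comp_apply, Equiv.prodComm_apply, Prod.fst_swap, Prod.snd_swap,
      add_comm p.2]
  rw [← (Equiv.prodComm ℕ ℕ).hasSum_iff, hswap]
  rw [← (Equiv.prodComm ℕ ℕ).summable_iff, hswap] at h
  exact hasSum_nestedSum h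

def lowerTriangleEquiv : ℕ × ℕ ≃ {p : ℕ × ℕ | p.1 ≤ p.2} where
  toFun p := ⟨(p.1, p.1 + p.2), Nat.le_add_right _ _⟩
  invFun q := (q.1.1, q.1.2 - q.1.1)
  left_inv p := by simp
  right_inv := fun ⟨(i, j), (h : i ≤ j)⟩ ↦ by simp [Nat.add_sub_cancel' h]

def upperTriangleEquiv : ℕ × ℕ ≃ ↥{p : ℕ × ℕ | p.1 ≤ p.2}ᶜ where
  toFun p := ⟨(p.1 + p.2 + 1, p.1), by simp⟩
  invFun q := (q.1.2, q.1.1 - q.1.2 - 1)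
  left_inv p := by ext <;> simp; omega
  right_inv := fun ⟨(i, j), h⟩ ↦ by
    have h : j < i := by simpa using h
    ext <;> simp; omega

theorem tsum_mul_tsum_eq_add_nestedSum (hf : Summable fun n ↦ ‖f n‖)
    (hg : Summable fun n ↦ ‖g n‖) :
    (∑' n, f n) * ∑' n, g n = ∑' n, (∑ i ∈ range (n + 1), f i) * g n + nestedSum g f := by
  have hfg := summable_mul_of_summable_norm hf hg
  have hlower : Summable fun p : ℕ × ℕ ↦ f p.1 * g (p.1 + p.2) :=
    hfg.comp_injective (Subtype.val_injective.comp lowerTriangleEquiv.injective)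
  have hupper : Summable fun p : ℕ × ℕ ↦ g p.1 * f (p.1 + p.2 + 1) :=
    (hfg.comp_injective (Subtype.val_injective.comp upperTriangleEquiv.injective)).congr
      fun p ↦ mul_comm _ _
  rw [tsum_mul_tsum_of_summable_norm hf hg]
  refine (HasSum.add_isCompl isCompl_compl (lowerTriangleEquiv.hasSum_iff.mp ?_)
    (upperTriangleEquiv.hasSum_iff.mp ?_)).tsum_eq
  · exact (hasSum_sum_range_succ_mul hlower.hasSum).tsum_eq ▸ hlower.hasSum
  · exact (hasSum_nestedSum hupper).congr_fun fun p ↦ mul_comm _ _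

end Triangles

section HurwitzTerm

variable {a b c : ℝ} {s : ℕ}

theorem summable_norm_hurwitzTerm (a : ℝ) (hs : 2 ≤ s) :
    Summable fun n ↦ ‖hurwitzTerm a s n‖ := by
  refine ((Real.summable_one_div_nat_add_rpow a s).mpr (by exact_mod_cast hs)).congr fun n ↦ ?_
  simp [hurwitzTerm, Real.rpow_natCast]

theorem hurwitzTerm_add_add_one (hc : a + b = c + 1) (s k n : ℕ) :
    hurwitzTerm c s (k + n + 1) = ((((k : ℝ) + a) + ((n : ℝ) + b)) ^ s)⁻¹ := by
  rw [hurwitzTerm, show ((k + n + 1 : ℕ) : ℝ) + c = ((k : ℝ) + a) + ((n : ℝ) + b) by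
    push_cast; linarith]

-- Iterate 1 / (x y) = (1 / x + 1 / y) / (x + y).
theorem partial_fraction_two_three {x y : ℝ} (hx : 0 < x) (hy : 0 < y) :
    (x ^ 2)⁻¹ * (y ^ 3)⁻¹ = (y ^ 3)⁻¹ * ((x + y) ^ 2)⁻¹ + 2 * ((y ^ 2)⁻¹ * ((x + y) ^ 3)⁻¹)
      + (x ^ 2)⁻¹ * ((x + y) ^ 3)⁻¹ + 3 * ((y ^ 1)⁻¹ * ((x + y) ^ 4)⁻¹)
      + 3 * ((x ^ 1)⁻¹ * ((x + y) ^ 4)⁻¹) := by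
  field_simp
  ring

theorem tsum_mul_tsum_hurwitzTerm_two_three (ha : 0 < a) (hb : 0 < b) (hc : a + b = c + 1) :
    (∑' n, hurwitzTerm a 2 n) * ∑' n, hurwitzTerm b 3 n =
      nestedSum (hurwitzTerm b 3) (hurwitzTerm c 2)
        + 2 * nestedSum (hurwitzTerm b 2) (hurwitzTerm c 3)
        + nestedSum (hurwitzTerm a 2) (hurwitzTerm c 3)
        + 3 * nestedSum (hurwitzTerm b 1) (hurwitzTerm c 4)
        + 3 * nestedSum (hurwitzTerm a 1) (hurwitzTerm c 4) := by
  have hfa := summable_norm_hurwitzTerm a (le_refl 2)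
  have hfb := summable_norm_hurwitzTerm b (by norm_num : 2 ≤ 3)
  set G := fun p : ℕ × ℕ ↦ hurwitzTerm a 2 p.1 * hurwitzTerm b 3 p.2
  set F₁ := fun p : ℕ × ℕ ↦ hurwitzTerm b 3 p.2 * hurwitzTerm c 2 (p.1 + p.2 + 1)
  set F₂ := fun p : ℕ × ℕ ↦ hurwitzTerm b 2 p.2 * hurwitzTerm c 3 (p.1 + p.2 + 1)
  set F₃ := fun p : ℕ × ℕ ↦ hurwitzTerm a 2 p.1 * hurwitzTerm c 3 (p.1 + p.2 + 1)
  set F₄ := fun p : ℕ × ℕ ↦ hurwitzTerm b 1 p.2 * hurwitzTerm c 4 (p.1 + p.2 + 1)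
  set F₅ := fun p : ℕ × ℕ ↦ hurwitzTerm a 1 p.1 * hurwitzTerm c 4 (p.1 + p.2 + 1)
  have split : ∀ p, G p = F₁ p + 2 * F₂ p + F₃ p + 3 * F₄ p + 3 * F₅ p ∧
      0 ≤ F₁ p ∧ 0 ≤ F₂ p ∧ 0 ≤ F₃ p ∧ 0 ≤ F₄ p ∧ 0 ≤ F₅ p := by
    rintro ⟨k, n⟩
    have hx : 0 < (k : ℝ) + a := by positivity
    have hy : 0 < (n : ℝ) + b := by positivity
    simp only [G, F₁, F₂, F₃, F₄, F₅, hurwitzTerm_add_add_one hc]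
    simp only [hurwitzTerm]
    exact ⟨partial_fraction_two_three hx hy, by positivity, by positivity, by positivity,
      by positivity, by positivity⟩
  choose identity nonneg₁ nonneg₂ nonneg₃ nonneg₄ nonneg₅ using split
  have dominated : ∀ p, F₁ p ≤ G p ∧ F₂ p ≤ G p ∧ F₃ p ≤ G p ∧ F₄ p ≤ G p ∧ F₅ p ≤ G p := by
    intro p
    refine ⟨?_, ?_, ?_, ?_, ?_⟩ <;>
      linarith [identity p, nonneg₁ p, nonneg₂ p, nonneg₃ p, nonneg₄ p, nonneg₅ p]
  choose le₁ le₂ le₃ le₄ le₅ using dominated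
  have hG : Summable G := summable_mul_of_summable_norm hfa hfb
  have h₁ := hasSum_nestedSum' (hG.of_nonneg_of_le nonneg₁ le₁)
  have h₂ := hasSum_nestedSum' (hG.of_nonneg_of_le nonneg₂ le₂)
  have h₃ := hasSum_nestedSum (hG.of_nonneg_of_le nonneg₃ le₃)
  have h₄ := hasSum_nestedSum' (hG.of_nonneg_of_le nonneg₄ le₄)
  have h₅ := hasSum_nestedSum (hG.of_nonneg_of_le nonneg₅ le₅)
  rw [tsum_mul_tsum_of_summable_norm hfa hfb]
  exact ((((h₁.add (h₂.mul_left 2)).add h₃).add (h₄.mul_left 3)).add (h₅.mul_left 3)).congr_fun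
    identity |>.tsum_eq

theorem tsum_hurwitzTerm_half (hs : 2 ≤ s) :
    ∑' n, hurwitzTerm (1 / 2) s n = (2 ^ s - 1) * ∑' n, hurwitzTerm 1 s n := by
  have h2 : (2 : ℝ) ^ s ≠ 0 := by positivity
  have heven : ∀ k, hurwitzTerm 1 s (2 * k) = ((2 : ℝ) ^ s)⁻¹ * hurwitzTerm (1 / 2) s k := by
    intro k
    rw [hurwitzTerm, hurwitzTerm, ← mul_inv, ← mul_pow]
    push_cast; ring_nf
  have hodd : ∀ k, hurwitzTerm 1 s (2 * k + 1) = ((2 : ℝ) ^ s)⁻¹ * hurwitzTerm 1 s k := by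
    intro k
    rw [hurwitzTerm, hurwitzTerm, ← mul_inv, ← mul_pow]
    push_cast; ring_nf
  have hsum := ((summable_norm_hurwitzTerm (1 / 2) hs).of_norm.hasSum.mul_left ((2 : ℝ) ^ s)⁻¹
    |>.congr_fun heven).even_add_odd
    ((summable_norm_hurwitzTerm 1 hs).of_norm.hasSum.mul_left ((2 : ℝ) ^ s)⁻¹ |>.congr_fun hodd)
  have := hsum.tsum_eq
  field_simp at this
  linarith

theorem tsum_hurwitzTerm_one_two : ∑' n, hurwitzTerm 1 2 n = Real.pi ^ 2 / 6 := by
  have h := (hasSum_nat_add_iff (f := fun n : ℕ ↦ 1 / (n : ℝ) ^ 2) 1).mpr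
    (by simpa using hasSum_zeta_two)
  refine (h.congr_fun fun n ↦ ?_).tsum_eq
  simp [hurwitzTerm]

end HurwitzTerm

theorem Tsum_eq_nestedSum (p q : ℕ) :
    Tsum p q = nestedSum (hurwitzTerm (1 / 2) p) (hurwitzTerm (1 / 2) q) :=
  tsum_congr fun _ ↦ div_eq_mul_inv _ _

theorem Rsum_eq_nestedSum (p q : ℕ) :
    Rsum p q = nestedSum (hurwitzTerm 1 p) (hurwitzTerm (1 / 2) q) :=
  tsum_congr fun _ ↦ div_eq_mul_inv _ _

theorem ttv_mul_zv {p q : ℕ} (hp : 2 ≤ p) (hq : 2 ≤ q) :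
    ttv p * zv q = Ssum p q + Rsum q p := by
  have hS : Ssum p q =
      ∑' n, (∑ i ∈ range (n + 1), hurwitzTerm (1 / 2) p i) * hurwitzTerm 1 q n :=
    tsum_congr fun _ ↦ div_eq_mul_inv _ _
  rw [hS, Rsum_eq_nestedSum]
  exact tsum_mul_tsum_eq_add_nestedSum (summable_norm_hurwitzTerm (1 / 2) hp)
    (summable_norm_hurwitzTerm 1 hq)

theorem stmt9 : Tsum 2 3 + Tsum 3 2 + Ssum 2 3 + Ssum 3 2 = 7 / 3 * Real.pi ^ 2 * zv 3 := by
  have stuffle₂₃ : ttv 2 * zv 3 = Ssum 2 3 + Rsum 3 2 := ttv_mul_zv le_rfl (by norm_num)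
  have stuffle₃₂ : ttv 3 * zv 2 = Ssum 3 2 + Rsum 2 3 := ttv_mul_zv (by norm_num) le_rfl
  have shuffle₂₃ : ttv 2 * zv 3 =
      Rsum 3 2 + 2 * Rsum 2 3 + Tsum 2 3 + 3 * Rsum 1 4 + 3 * Tsum 1 4 := by
    simp only [Rsum_eq_nestedSum, Tsum_eq_nestedSum]
    exact tsum_mul_tsum_hurwitzTerm_two_three (a := 1 / 2) (b := 1) (c := 1 / 2)
      (by norm_num) one_pos (by norm_num)
  have shuffle₃₂ : zv 2 * ttv 3 =
      Tsum 3 2 + 2 * Tsum 2 3 + Rsum 2 3 + 3 * Tsum 1 4 + 3 * Rsum 1 4 := by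
    simp only [Rsum_eq_nestedSum, Tsum_eq_nestedSum]
    exact tsum_mul_tsum_hurwitzTerm_two_three (a := 1) (b := 1 / 2) (c := 1 / 2)
      one_pos (by norm_num) (by norm_num)
  have ttv_three : ttv 3 = (2 ^ 3 - 1) * zv 3 := tsum_hurwitzTerm_half (by norm_num)
  have zv_two : zv 2 = Real.pi ^ 2 / 6 := tsum_hurwitzTerm_one_two
  rw [ttv_three, zv_two] at stuffle₃₂ shuffle₃₂
  linarith
end

section
/- For integers n ≥ 0: ∑_{i=0}^{2n} (−1)^i·C(2n,i)·G_{i+3}·G_{2n+3−i}/((i+3)(2n+3−i)) = −G_{2n+6}/(15(2n+6)) + G_{2n+2}/(15(2n+2)), where G_n are the Genocchi numbers. -/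
/-!
The series `φ = 2 / (eˣ + 1) = ∑ G_{n+1} xⁿ / (n+1)!` is shifted by one to `u = φ - 1 = -tanh (x/2)`,
which satisfies the Riccati equation `2u' = u² - 1`. Differentiating it repeatedly expresses all
derivatives of `u` as polynomials in `u` and `u'`, which yields `15 (u'')² = u⁽⁵⁾ - u'`. Comparing
the coefficients of `x^{2n}` gives the identity; the sign `(-1)ⁱ` can be dropped because
`G_{i+3} = 0` for even `i`.
-/

/-- Genocchi numbers: G_n = 2(1-2^n)B_n, with B_n the Bernoulli numbers (B_1 = -1/2). -/
noncomputable def genocchi (n : ℕ) : ℚ := 2 * (1 - 2 ^ n) * bernoulli n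

open PowerSeries Nat

section Riccati

variable {A : Type*} [CommRing A] [Algebra ℚ A]

theorem Derivation.fifteen_mul_sq_iterate_two_of_riccati (D : Derivation ℚ A A) {u : A}
    (h : 2 * D u = u ^ 2 - 1) : 15 * (D^[2] u) ^ 2 = D^[5] u - D u := by
  have hD2 : D (D u) = u * D u := by
    have h2 : IsUnit (2 : A) := by
      simpa only [map_ofNat] using (IsUnit.mk0 (2 : ℚ) two_ne_zero).map (algebraMap ℚ A)
    have hd := congrArg D h
    simp only [Derivation.leibniz, Derivation.leibniz_pow, map_sub, D.map_one_eq_zero,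
      smul_eq_mul, nsmul_eq_mul] at hd
    rw [show D (2 : A) = 0 by simpa using D.map_natCast 2] at hd
    exact h2.mul_left_cancel (by linear_combination hd)
  have hD3 : D (D (D u)) = D u ^ 2 + u * D (D u) := by
    have hd := congrArg D hD2
    simp only [Derivation.leibniz, smul_eq_mul] at hd
    linear_combination hd
  have hD4 : D (D (D (D u))) = 3 * D u * D (D u) + u * D (D (D u)) := by
    have hd := congrArg D hD3
    simp only [map_add, Derivation.leibniz, Derivation.leibniz_pow, smul_eq_mul, nsmul_eq_mul] at hd
    linear_combination hd
  have hD5 : D (D (D (D (D u)))) =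
      3 * D (D u) ^ 2 + 4 * D u * D (D (D u)) + u * D (D (D (D u))) := by
    have hd := congrArg D hD4
    simp only [map_add, Derivation.leibniz, smul_eq_mul] at hd
    rw [show D (3 : A) = 0 by simpa using D.map_natCast 3] at hd
    linear_combination hd
  simp only [Function.iterate_succ, Function.iterate_zero, Function.comp_apply, id]
  rw [hD5, hD4, hD3, hD2]
  -- what remains is `u' (2u' - u² - 1) (2u' - u² + 1) = 0`
  linear_combination (-D u * (2 * D u - u ^ 2 - 1)) * h

end Riccati

noncomputable def genocchiSeries : ℚ⟦X⟧ := mk fun n => genocchi (n + 1) / (n + 1)!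

theorem X_mul_genocchiSeries :
    X * genocchiSeries = 2 * bernoulliPowerSeries ℚ - 2 * rescale 2 (bernoulliPowerSeries ℚ) := by
  rw [show (2 : ℚ⟦X⟧) = C 2 from (map_ofNat C 2).symm]
  ext (_ | n)
  · simp [-coeff_zero_eq_constantCoeff, coeff_zero_X_mul, bernoulliPowerSeries, coeff_rescale]
  · simp only [genocchiSeries, genocchi, coeff_succ_X_mul, coeff_mk, bernoulliPowerSeries,
      Algebra.algebraMap_self, map_div₀, eq_ratCast, Rat.cast_eq_id, id_eq, map_natCast, map_sub,
      coeff_C_mul, coeff_rescale]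
    ring

theorem genocchiSeries_mul_exp_add_one : genocchiSeries * (exp ℚ + 1) = 2 := by
  have hB := bernoulliPowerSeries_mul_exp_sub_one ℚ
  have hB2 := congrArg (rescale ((2 : ℕ) : ℚ)) hB
  rw [map_mul, map_sub, map_one, ← exp_pow_eq_rescale_exp, rescale_X, map_natCast] at hB2
  push_cast at hB2
  have hexp : exp ℚ - 1 ≠ 0 := fun h => by simpa using congrArg (coeff 1) h
  refine mul_left_cancel₀ X_ne_zero (mul_right_cancel₀ hexp ?_)
  linear_combination ((exp ℚ + 1) * (exp ℚ - 1)) * X_mul_genocchiSeries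
    + (2 * (exp ℚ + 1)) * hB - 2 * hB2

theorem two_mul_derivative_genocchiSeries_sub_one :
    2 * d⁄dX ℚ (genocchiSeries - 1) = (genocchiSeries - 1) ^ 2 - 1 := by
  have hd := congrArg (d⁄dX ℚ) genocchiSeries_mul_exp_add_one
  simp only [Derivation.leibniz, map_add, derivative_exp, derivative_one, smul_eq_mul,
    add_zero] at hd
  rw [show d⁄dX ℚ (2 : ℚ⟦X⟧) = 0 by simpa using (d⁄dX ℚ).map_natCast 2] at hd
  have hexp : exp ℚ + 1 ≠ 0 := fun h => by simpa using congrArg constantCoeff h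
  refine mul_right_cancel₀ hexp ?_
  rw [map_sub, derivative_one, sub_zero]
  linear_combination 2 * hd - genocchiSeries * genocchiSeries_mul_exp_add_one

theorem coeff_iterate_derivative_genocchiSeries (k m : ℕ) :
    coeff m ((d⁄dX ℚ)^[k] genocchiSeries) = genocchi (m + k + 1) / ((m + k + 1) * m !) := by
  rw [coeff_iterate_derivative, genocchiSeries, coeff_mk, factorial_succ,
    ← factorial_mul_ascFactorial]
  push_cast
  field_simp

theorem iterate_derivative_genocchiSeries_sub_one (k : ℕ) :
    (d⁄dX ℚ)^[k + 1] (genocchiSeries - 1) = (d⁄dX ℚ)^[k + 1] genocchiSeries := by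
  rw [Function.iterate_succ_apply, Function.iterate_succ_apply, map_sub, derivative_one, sub_zero]

theorem fifteen_mul_sum_genocchi_mul_genocchi (m : ℕ) :
    15 * ∑ i ∈ Finset.range (m + 1), genocchi (i + 3) / ((i + 3) * i !)
        * (genocchi (m - i + 3) / (((m - i : ℕ) + 3) * (m - i)!))
      = genocchi (m + 6) / ((m + 6) * m !) - genocchi (m + 2) / ((m + 2) * m !) := by
  have key := congrArg (coeff m) <| (d⁄dX ℚ).fifteen_mul_sq_iterate_two_of_riccati
    two_mul_derivative_genocchiSeries_sub_one
  rw [iterate_derivative_genocchiSeries_sub_one 1, iterate_derivative_genocchiSeries_sub_one 4,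
    show d⁄dX ℚ (genocchiSeries - 1) = (d⁄dX ℚ)^[1] genocchiSeries from
      iterate_derivative_genocchiSeries_sub_one 0,
    map_sub, ← map_ofNat C, coeff_C_mul, sq, coeff_mul,
    Finset.Nat.sum_antidiagonal_eq_sum_range_succ_mk] at key
  simp only [coeff_iterate_derivative_genocchiSeries] at key
  convert key using 4 <;> push_cast <;> ring_nf

theorem genocchi_eq_zero_of_odd {n : ℕ} (h_odd : Odd n) (hlt : 1 < n) : genocchi n = 0 := by
  simp [genocchi, bernoulli_eq_zero_of_odd h_odd hlt]

theorem neg_one_pow_mul_genocchi_add_three (i : ℕ) :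
    (-1 : ℚ) ^ i * genocchi (i + 3) = -genocchi (i + 3) := by
  rcases i.even_or_odd with hi | hi
  · rw [genocchi_eq_zero_of_odd (hi.add_odd (by decide)) (by omega), mul_zero, neg_zero]
  · rw [hi.neg_one_pow, neg_one_mul]

theorem stmt15 (n : ℕ) :
    ∑ i ∈ Finset.range (2 * n + 1), (-1 : ℚ) ^ i * ((2 * n).choose i : ℚ)
        * genocchi (i + 3) * genocchi (2 * n + 3 - i)
        / (((i + 3 : ℕ) : ℚ) * ((2 * n + 3 - i : ℕ) : ℚ))
    = -genocchi (2 * n + 6) / (15 * ((2 * n + 6 : ℕ) : ℚ))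
        + genocchi (2 * n + 2) / (15 * ((2 * n + 2 : ℕ) : ℚ)) := by
  have hterm : ∀ i ∈ Finset.range (2 * n + 1),
      (-1 : ℚ) ^ i * ((2 * n).choose i : ℚ) * genocchi (i + 3) * genocchi (2 * n + 3 - i)
        / (((i + 3 : ℕ) : ℚ) * ((2 * n + 3 - i : ℕ) : ℚ))
      = -(2 * n)! * (genocchi (i + 3) / ((i + 3) * i !)
        * (genocchi (2 * n - i + 3) / (((2 * n - i : ℕ) + 3) * (2 * n - i)!))) := by
    intro i hmem
    have hi : i ≤ 2 * n := Finset.mem_range_succ_iff.mp hmem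
    rw [mul_right_comm _ ((2 * n).choose i : ℚ), neg_one_pow_mul_genocchi_add_three,
      Nat.cast_choose ℚ hi, show 2 * n + 3 - i = 2 * n - i + 3 by omega]
    push_cast
    field_simp
  rw [Finset.sum_congr rfl hterm, ← Finset.mul_sum]
  have hconv := fifteen_mul_sum_genocchi_mul_genocchi (2 * n)
  push_cast at hconv ⊢
  linear_combination (norm := (field_simp; ring)) (-((2 * n)! : ℚ) / 15) * hconv
end

section
/- For integers q ≥ 2: ∑_{i=0}^{q-1} C(q−1,i)·B_{q+i}·G_{q−i}/((q+i)(q−i)) = (−1)^q·G_{2q}/(q·C(2q,q)·2q) − G_q²/(4q²), where B_n are Bernoulli numbers and G_n are Genocchi numbers. -/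
open PowerSeries Finset
open scoped Nat

namespace GenocchiBernoulli

noncomputable def genocchiSeries : ℚ⟦X⟧ := mk fun n => genocchi (n + 1) / (n + 1)!

theorem X_mul_genocchiSeries :
    X * genocchiSeries = 2 * (bernoulliPowerSeries ℚ - rescale 2 (bernoulliPowerSeries ℚ)) := by
  ext (_ | n)
  · rw [coeff_zero_X_mul, ← map_ofNat C, coeff_C_mul, map_sub, coeff_rescale]
    simp [bernoulliPowerSeries]
  · rw [coeff_succ_X_mul, genocchiSeries, coeff_mk, ← map_ofNat C, coeff_C_mul]
    simp [bernoulliPowerSeries, coeff_rescale, genocchi]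
    ring

theorem exp_add_one_mul_genocchiSeries : (exp ℚ + 1) * genocchiSeries = 2 := by
  have hB := bernoulliPowerSeries_mul_exp_sub_one ℚ
  have hB₂ : rescale 2 (bernoulliPowerSeries ℚ) * (rescale 2 (exp ℚ) - 1) = 2 * X := by
    simpa [← map_ofNat C] using congrArg (rescale (2 : ℚ)) hB
  have hexp : exp ℚ * exp ℚ = rescale 2 (exp ℚ) := by
    simpa [one_add_one_eq_two] using exp_mul_exp_eq_exp_add (1 : ℚ) 1
  have hexp_sub : exp ℚ - 1 ≠ 0 := fun h ↦ by
    simpa [coeff_exp] using congrArg (coeff 1) h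
  have key : (exp ℚ - 1) * X * ((exp ℚ + 1) * genocchiSeries - 2) = 0 := by
    linear_combination (exp ℚ + 1) * (exp ℚ - 1) * X_mul_genocchiSeries
      + 2 * (exp ℚ + 1) * hB - 2 * rescale 2 (bernoulliPowerSeries ℚ) * hexp - 2 * hB₂
  simpa [hexp_sub, X_ne_zero, sub_eq_zero] using key

theorem rescale_neg_one_genocchiSeries : rescale (-1) genocchiSeries = 2 - genocchiSeries := by
  have hneg : (rescale (-1) (exp ℚ) + 1) * rescale (-1) genocchiSeries = 2 := by
    simpa [map_ofNat] using congrArg (rescale (-1 : ℚ)) exp_add_one_mul_genocchiSeries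
  have hinv : exp ℚ * rescale (-1) (exp ℚ) = 1 := exp_mul_exp_neg_eq_one (A := ℚ)
  have hexp_add : exp ℚ + 1 ≠ 0 := fun h ↦ by
    simpa [coeff_exp] using congrArg (coeff 0) h
  have key : (exp ℚ + 1) * (rescale (-1) genocchiSeries - (2 - genocchiSeries)) = 0 := by
    linear_combination exp ℚ * hneg - rescale (-1) genocchiSeries * hinv
      + exp_add_one_mul_genocchiSeries
  simpa [hexp_add, sub_eq_zero] using key

noncomputable def bernoulliShiftSeries : ℚ⟦X⟧ := mk fun n => bernoulli (n + 1) / (n + 1)!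

theorem X_mul_bernoulliShiftSeries : X * bernoulliShiftSeries = bernoulliPowerSeries ℚ - 1 := by
  ext (_ | n)
  · simp [bernoulliPowerSeries]
  · simp [coeff_succ_X_mul, bernoulliShiftSeries, bernoulliPowerSeries]

noncomputable def rescaleDivDiff {A : Type*} [CommRing A] (f : A⟦X⟧) (a b : A) : A⟦X⟧ :=
  mk fun n => coeff (n + 1) f * ∑ i ∈ range (n + 1), a ^ i * b ^ (n - i)

theorem rescale_sub_rescale {A : Type*} [CommRing A] (f : A⟦X⟧) (a b : A) :
    rescale a f - rescale b f = C (a - b) * X * rescaleDivDiff f a b := by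
  rw [mul_comm (C _), mul_assoc]
  ext (_ | n)
  · rw [coeff_zero_X_mul, map_sub, coeff_rescale, coeff_rescale]
    simp
  · have hgeom := (Commute.all a b).mul_geom_sum₂ (n + 1)
    simp only [add_tsub_cancel_right] at hgeom
    rw [coeff_succ_X_mul, coeff_C_mul, rescaleDivDiff, coeff_mk, map_sub, coeff_rescale,
      coeff_rescale]
    linear_combination -coeff (n + 1) f * hgeom

section Rescale

variable {A : Type*} [CommRing A] [Algebra ℚ A]

noncomputable def rescaleMap (a : A) : ℚ⟦X⟧ →+* A⟦X⟧ :=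
  (rescale a).comp (map (algebraMap ℚ A))

theorem coeff_rescaleMap (a : A) (f : ℚ⟦X⟧) (n : ℕ) :
    coeff n (rescaleMap a f) = a ^ n * algebraMap ℚ A (coeff n f) := by
  simp [rescaleMap, coeff_rescale]

@[simp]
theorem constantCoeff_rescaleMap (a : A) (f : ℚ⟦X⟧) :
    constantCoeff (rescaleMap a f) = algebraMap ℚ A (constantCoeff f) := by
  simpa using coeff_rescaleMap a f 0

theorem rescaleMap_X (a : A) : rescaleMap a X = C a * X := by
  simp [rescaleMap]

theorem rescaleMap_exp_mul_rescaleMap_exp (a b : A) :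
    rescaleMap a (exp ℚ) * rescaleMap b (exp ℚ) = rescaleMap (a + b) (exp ℚ) := by
  simpa [rescaleMap, map_exp] using exp_mul_exp_eq_exp_add a b

theorem rescaleMap_neg (a : A) (f : ℚ⟦X⟧) :
    rescaleMap (-a) f = rescaleMap a (rescale (-1) f) := by
  ext n
  simp [coeff_rescaleMap, coeff_rescale, neg_pow a]
  ring

end Rescale

section Identity

variable {A : Type*} [CommRing A] [IsDomain A] [Algebra ℚ A]

theorem bernoulli_genocchi_series_identity (x y : A) (hxy : x + y ≠ 0) :
    2 * rescaleDivDiff (map (algebraMap ℚ A) genocchiSeries) x (-y)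
      + 2 * rescaleMap (x + y) bernoulliShiftSeries
        * (rescaleMap x genocchiSeries + rescaleMap y genocchiSeries - 2)
      + rescaleMap x genocchiSeries * rescaleMap y genocchiSeries = 0 := by
  set H := genocchiSeries
  set B := bernoulliPowerSeries ℚ
  set K := rescaleDivDiff (map (algebraMap ℚ A) H) x (-y)
  set D := bernoulliShiftSeries
  have hB : rescaleMap (x + y) B * (rescaleMap (x + y) (exp ℚ) - 1) = C (x + y) * X := by
    simpa [rescaleMap_X] using
      congrArg (rescaleMap (x + y)) (bernoulliPowerSeries_mul_exp_sub_one ℚ)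
  have hD : rescaleMap (x + y) B - 1 = C (x + y) * X * rescaleMap (x + y) D := by
    simpa [rescaleMap_X] using congrArg (rescaleMap (x + y)) X_mul_bernoulliShiftSeries.symm
  have hHx : (rescaleMap x (exp ℚ) + 1) * rescaleMap x H = 2 := by
    simpa [map_ofNat] using congrArg (rescaleMap x) exp_add_one_mul_genocchiSeries
  have hHy : (rescaleMap y (exp ℚ) + 1) * rescaleMap y H = 2 := by
    simpa [map_ofNat] using congrArg (rescaleMap y) exp_add_one_mul_genocchiSeries
  have hK : rescaleMap x H + rescaleMap y H - 2 = C (x + y) * X * K := by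
    have h := rescale_sub_rescale (map (algebraMap ℚ A) H) x (-y)
    rw [sub_neg_eq_add] at h
    change rescaleMap x H - rescaleMap (-y) H = _ at h
    rw [rescaleMap_neg, rescale_neg_one_genocchiSeries, map_sub, map_ofNat] at h
    linear_combination h
  have hsum : (rescaleMap x (exp ℚ) + 1) * (rescaleMap y (exp ℚ) + 1)
      * (2 * rescaleMap (x + y) B * (rescaleMap x H + rescaleMap y H - 2)
        + C (x + y) * X * rescaleMap x H * rescaleMap y H) = 0 := by
    linear_combination (2 * rescaleMap (x + y) B * (rescaleMap y (exp ℚ) + 1)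
        + C (x + y) * X * (rescaleMap y (exp ℚ) + 1) * rescaleMap y H) * hHx
      + (2 * rescaleMap (x + y) B * (rescaleMap x (exp ℚ) + 1) + 2 * C (x + y) * X) * hHy
      - 4 * hB - 4 * rescaleMap (x + y) B * rescaleMap_exp_mul_rescaleMap_exp x y
  have hexp : (rescaleMap x (exp ℚ) + 1) * (rescaleMap y (exp ℚ) + 1) ≠ 0 := fun h ↦ by
    have := algebraRat.charZero A
    simpa [one_add_one_eq_two] using congrArg constantCoeff h
  have hX : C (x + y) * X ≠ (0 : A⟦X⟧) :=
    mul_ne_zero (by rwa [Ne, map_eq_zero_iff C C_injective]) X_ne_zero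
  refine (mul_eq_zero.mp ?_).resolve_left hX
  linear_combination (mul_eq_zero.mp hsum).resolve_left hexp
    - 2 * (rescaleMap x H + rescaleMap y H - 2) * hD - 2 * hK

end Identity

local notation "Y" => (Polynomial.X : Polynomial ℚ)

theorem coeff_one_add_X_pow_mul_one_add_X_pow {a b n : ℕ} (h : a + b = 2 * n) :
    ((1 + Y) ^ a * (1 + Y ^ b)).coeff n = 2 * a.choose n := by
  rw [mul_add, mul_one, Polynomial.coeff_add, Polynomial.coeff_mul_X_pow',
    Polynomial.coeff_one_add_X_pow]
  split_ifs with hb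
  · rw [Polynomial.coeff_one_add_X_pow,
      Nat.choose_symm_of_eq_add (show a = n + (n - b) by omega)]
    ring
  · rw [Nat.choose_eq_zero_of_lt (by omega)]
    simp

theorem sum_antidiagonal_choose_mul {R : Type*} [CommSemiring R] (f : ℕ → ℕ → R) (n : ℕ) :
    ∑ p ∈ antidiagonal (2 * n), (p.1.choose n : R) * f p.1 p.2
      = ∑ i ∈ range (n + 1), ((n + i).choose n : R) * f (n + i) (n - i) := by
  rw [Nat.sum_antidiagonal_eq_sum_range_succ (fun a b ↦ (a.choose n : R) * f a b),
    Nat.succ_eq_add_one, show 2 * n + 1 = n + (n + 1) by ring, sum_range_add]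
  rw [sum_eq_zero fun a ha ↦ by rw [Nat.choose_eq_zero_of_lt (mem_range.mp ha)]; simp, zero_add]
  refine sum_congr rfl fun i hi ↦ ?_
  rw [show 2 * n - (n + i) = n - i by omega]

theorem coeff_coeff_rescaleDivDiff_one_neg_X (f : ℚ⟦X⟧) {k m : ℕ} (hk : k ≤ m) :
    (coeff m (rescaleDivDiff (map (algebraMap ℚ (Polynomial ℚ)) f) 1 (-Y))).coeff k
      = (-1) ^ k * coeff (m + 1) f := by
  have hsum : ∑ i ∈ range (m + 1), (1 : Polynomial ℚ) ^ i * (-Y) ^ (m - i)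
      = ∑ j ∈ range (m + 1), Polynomial.C ((-1) ^ j) * Y ^ j := by
    rw [← sum_range_reflect]
    refine sum_congr rfl fun i hi ↦ ?_
    rw [one_pow, one_mul, neg_pow, Polynomial.C_pow, Polynomial.C_neg, Polynomial.C_1,
      show m - (m + 1 - 1 - i) = i by have := mem_range.mp hi; omega]
  simp only [rescaleDivDiff, coeff_mk, coeff_map, Polynomial.algebraMap_eq, hsum,
    Polynomial.coeff_C_mul, Polynomial.finsetSum_coeff, Polynomial.coeff_X_pow, mul_ite, mul_one,
    mul_zero]
  rw [sum_ite_eq, if_pos (mem_range.mpr (by omega)), mul_comm]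

theorem coeff_coeff_rescaleMap_one_mul_rescaleMap_X (f g : ℚ⟦X⟧) {k m : ℕ} (hk : k ≤ m) :
    (coeff m (rescaleMap 1 f * rescaleMap Y g)).coeff k = coeff (m - k) f * coeff k g := by
  simp only [coeff_mul, coeff_rescaleMap, one_pow, one_mul, Polynomial.algebraMap_eq,
    Polynomial.finsetSum_coeff, Polynomial.X_pow_mul, ← mul_assoc, ← Polynomial.C_mul,
    Polynomial.coeff_C_mul_X_pow]
  rw [sum_eq_single (m - k, k)]
  · simp
  · intro p hp hne
    rw [if_neg]
    rintro rfl
    exact hne (Prod.ext (by have := mem_antidiagonal.mp hp; omega) rfl)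
  · simp; omega

theorem coeff_coeff_rescaleMap_mul_rescaleMap_add (f g : ℚ⟦X⟧) (n : ℕ) :
    (coeff (2 * n) (rescaleMap (1 + Y) f * (rescaleMap 1 g + rescaleMap Y g))).coeff n
      = 2 * ∑ i ∈ range (n + 1),
          ((n + i).choose n : ℚ) * coeff (n + i) f * coeff (n - i) g := by
  have hterm : ∀ p ∈ antidiagonal (2 * n),
      (coeff p.1 (rescaleMap (1 + Y) f) * coeff p.2 (rescaleMap 1 g + rescaleMap Y g)).coeff n
      = 2 * ((p.1.choose n : ℚ) * (coeff p.1 f * coeff p.2 g)) := by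
    intro p hp
    have hprod : coeff p.1 (rescaleMap (1 + Y) f) * coeff p.2 (rescaleMap 1 g + rescaleMap Y g)
        = Polynomial.C (coeff p.1 f * coeff p.2 g) * ((1 + Y) ^ p.1 * (1 + Y ^ p.2)) := by
      simp only [map_add, coeff_rescaleMap, one_pow, one_mul, Polynomial.algebraMap_eq,
        Polynomial.C_mul]
      ring
    rw [hprod, Polynomial.coeff_C_mul,
      coeff_one_add_X_pow_mul_one_add_X_pow (mem_antidiagonal.mp hp)]
    ring
  rw [coeff_mul, Polynomial.finsetSum_coeff, sum_congr rfl hterm, ← mul_sum,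
    sum_antidiagonal_choose_mul (fun a b ↦ coeff a f * coeff b g)]
  simp only [mul_assoc]

theorem genocchi_bernoulli_coeff_identity {n : ℕ} (hn : 1 ≤ n) :
    2 * (-1) ^ n * (genocchi (2 * n + 2) / (2 * n + 2)!)
      + 4 * ∑ i ∈ range (n + 1), ((n + i).choose n : ℚ)
          * (bernoulli (n + i + 1) / (n + i + 1)!) * (genocchi (n - i + 1) / (n - i + 1)!)
      + (genocchi (n + 1) / (n + 1)!) ^ 2 = 0 := by
  have hX : 1 + Y ≠ 0 := by
    simpa [add_comm] using Polynomial.X_add_C_ne_zero (1 : ℚ)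
  have hD : coeff (2 * n) bernoulliShiftSeries = 0 := by
    simp [bernoulliShiftSeries, bernoulli_eq_zero_of_odd (odd_two_mul_add_one n) (by omega)]
  have h := bernoulli_genocchi_series_identity 1 Y hX
  set K := rescaleDivDiff (map (algebraMap ℚ (Polynomial ℚ)) genocchiSeries) 1 (-Y)
  set Ds := rescaleMap (1 + Y) bernoulliShiftSeries
  set H₁ := rescaleMap (1 : Polynomial ℚ) genocchiSeries
  set Hₓ := rescaleMap Y genocchiSeries
  have h₂ : C 2 * K + C 2 * (Ds * (H₁ + Hₓ)) - C 4 * Ds + H₁ * Hₓ = 0 := by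
    simp only [map_ofNat]
    linear_combination h
  have hDs : coeff (2 * n) Ds = 0 := by simp [Ds, coeff_rescaleMap, hD]
  have h' := congrArg (fun F ↦ (coeff (2 * n) F).coeff n) h₂
  simp only [map_add, map_sub, map_zero, coeff_C_mul, Polynomial.coeff_add,
    Polynomial.coeff_ofNat_mul, hDs, mul_zero, Polynomial.coeff_zero, sub_zero] at h'
  rw [coeff_coeff_rescaleDivDiff_one_neg_X _ (by omega),
    coeff_coeff_rescaleMap_mul_rescaleMap_add,
    coeff_coeff_rescaleMap_one_mul_rescaleMap_X _ _ (by omega), show 2 * n - n = n by omega] at h'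
  simp only [bernoulliShiftSeries, genocchiSeries, coeff_mk] at h'
  linear_combination h'

theorem choose_mul_div_eq_factorial_sq_mul {i n : ℕ} (hi : i ≤ n) (f g : ℕ → ℚ) :
    (n.choose i : ℚ) * f (n + 1 + i) * g (n + 1 - i)
        / (((n + 1 + i : ℕ) : ℚ) * ((n + 1 - i : ℕ) : ℚ))
      = (n ! : ℚ) ^ 2 * (((n + i).choose n : ℚ)
        * (f (n + i + 1) / (n + i + 1)!) * (g (n - i + 1) / (n - i + 1)!)) := by
  obtain ⟨j, rfl⟩ := Nat.exists_eq_add_of_le hi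
  rw [show i + j + 1 - i = j + 1 by omega, show i + j - i = j by omega,
    show i + j + 1 + i = (i + j + i) + 1 by ring, Nat.cast_add_choose, Nat.cast_add_choose]
  push_cast [Nat.factorial_succ]
  field_simp

end GenocchiBernoulli

theorem stmt17 (q : ℕ) (hq : 2 ≤ q) :
    ∑ i ∈ Finset.range q, ((q - 1).choose i : ℚ) * bernoulli (q + i) * genocchi (q - i)
        / (((q + i : ℕ) : ℚ) * ((q - i : ℕ) : ℚ))
    = (-1 : ℚ) ^ q * genocchi (2 * q) / ((q : ℚ) * ((2 * q).choose q : ℚ) * (2 * q : ℚ))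
        - genocchi q ^ 2 / (4 * (q : ℚ) ^ 2) := by
  obtain ⟨n, rfl⟩ : ∃ n, q = n + 1 := ⟨q - 1, by omega⟩
  have hcoeff := GenocchiBernoulli.genocchi_bernoulli_coeff_identity (n := n) (by omega)
  rw [Nat.add_sub_cancel, sum_congr rfl fun i hi ↦
    GenocchiBernoulli.choose_mul_div_eq_factorial_sq_mul
    (Nat.lt_succ_iff.mp (mem_range.mp hi)) bernoulli genocchi, ← mul_sum]
  have h2 : ((2 * (n + 1))! : ℚ) = ((2 * (n + 1)).choose (n + 1)) * (n + 1)! * (n + 1)! := by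
    rw [two_mul, ← Nat.add_choose_mul_factorial_mul_factorial]; push_cast; ring
  rw [show 2 * n + 2 = 2 * (n + 1) by ring, h2] at hcoeff
  linear_combination (norm := skip) ((n ! : ℚ) ^ 2 / 4) * hcoeff
  push_cast [Nat.factorial_succ]
  field_simp
  ring
end
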